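/- Suppose every unitary matrix V with Vρ_iV† = ρ_i commutes with H. Then the variation in transferred energy is the same for all complete discharge processes: for any two unitaries P and P' such that Pρ_iP† and P'ρ_iP'† are both passive, tr(P†HPHρ_i) = tr(P'†HP'Hρ_i). -/

import Mathlib

/-!
Diagonalise `ρi = U diag(p) U†`. Sign changes of one coordinate, and transpositions of two
coordinates with equal populations, fix `diag(p)`; so the hypothesis forces `U†HU = diag(a)` with
`a` a function of `p`. For a unitary `Q` the matrix `D = (|Q'ⱼₖ|²)`, `Q' = U†QU`, is doubly
stochastic, the energy of `QρiQ†` is `∑ aⱼ Dⱼₖ pₖ`, and `tr(Q†HQHρi) = ∑ aⱼ Dⱼₖ aₖ pₖ`.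
By Birkhoff's theorem `D` is a convex combination of permutation matrices. If `QρiQ†` is passive,
each permutation `σ` of positive weight has minimal energy, so by the equality case of the
rearrangement inequality `p ∘ σ` antivaries with `a`. For all such `σ` the sum `∑ aⱼ h(p(σ j))`
is the same for every monotone `h`, hence for every `h`, since on the finitely many values of `p`
any function is a combination of monotone indicators; take `h(pₖ) = aₖ pₖ`.
-/

open Matrix Kronecker
open scoped ComplexOrder

attribute [local instance] Matrix.frobeniusSeminormedAddCommGroup
  Matrix.frobeniusNormedAddCommGroup Matrix.frobeniusNormedSpace

noncomputable section

namespace QSLPaper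

/-- `U` is a unitary matrix. -/
def IsUnitary {ι : Type*} [Fintype ι] [DecidableEq ι] (U : Matrix ι ι ℂ) : Prop :=
  Uᴴ * U = 1

/-- `ρ` is a density matrix: positive semidefinite with unit trace. -/
def IsDensity {ι : Type*} [Fintype ι] [DecidableEq ι] (ρ : Matrix ι ι ℂ) : Prop :=
  ρ.PosSemidef ∧ ρ.trace = 1

/-- `ρ` is passive relative to the observable `A` and the initial state `ρi`:
`tr(ρA) ≤ tr(VρiV†A)` for every unitary `V`. -/
def IsPassive {ι : Type*} [Fintype ι] [DecidableEq ι] (A ρi ρ : Matrix ι ι ℂ) : Prop :=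
  ∀ V : Matrix ι ι ℂ, IsUnitary V → ((ρ * A).trace).re ≤ (((V * ρi * Vᴴ) * A).trace).re

/-- `ρ` is a passive state: a state (unitary conjugate of `ρi`) which is passive. -/
def IsPassiveState {ι : Type*} [Fintype ι] [DecidableEq ι] (A ρi ρ : Matrix ι ι ℂ) : Prop :=
  (∃ U, IsUnitary U ∧ ρ = U * ρi * Uᴴ) ∧ IsPassive A ρi ρ

/-- `P(ρi)`: the set of unitaries transforming `ρi` into a passive state. -/
def PassivizingSet {ι : Type*} [Fintype ι] [DecidableEq ι] (A ρi : Matrix ι ι ℂ) :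
    Set (Matrix ι ι ℂ) :=
  {U | IsUnitary U ∧ IsPassive A ρi (U * ρi * Uᴴ)}

/-- There is a continuous family of Hermitian Hamiltonians on `[0,τ]` with
`tr(H(t)²) ≤ b` driving `ρ0` (via the von Neumann equation) to a state satisfying `final`
in time `τ`. -/
def ReachesIn {ι : Type*} [Fintype ι] [DecidableEq ι]
    (ρ0 : Matrix ι ι ℂ) (final : Matrix ι ι ℂ → Prop) (b τ : ℝ) : Prop :=
  ∃ H ρ : ℝ → Matrix ι ι ℂ,
    ContinuousOn H (Set.Icc 0 τ) ∧
    (∀ t ∈ Set.Icc (0:ℝ) τ, (H t).IsHermitian) ∧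
    (∀ t ∈ Set.Icc (0:ℝ) τ, ((H t * H t).trace).re ≤ b) ∧
    ρ 0 = ρ0 ∧
    (∀ t ∈ Set.Icc (0:ℝ) τ,
      HasDerivWithinAt ρ ((-Complex.I) • (H t * ρ t - ρ t * H t)) (Set.Icc 0 τ) t) ∧
    final (ρ τ)

/-- The passivization time: the infimum of times in which `ρi` can be driven to a passive
state by a Hamiltonian of bandwidth at most `ω²`. -/
def tauPas {ι : Type*} [Fintype ι] [DecidableEq ι] (A ρi : Matrix ι ι ℂ) (ω : ℝ) : ℝ :=
  sInf {τ | 0 ≤ τ ∧ ReachesIn ρi (IsPassive A ρi) (ω^2) τ}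

/-- `e` is an orthonormal family (hence basis) of `ℂⁿ`. -/
def IsONBasis {n : ℕ} (e : Fin n → (Fin n → ℂ)) : Prop :=
  ∀ j k, star (e j) ⬝ᵥ e k = if j = k then 1 else 0

/-- The discrepancy: given the eigenvalue lists `a` (of `A`), `p` (of `ρi`) and `q`
(of the reference passive state), it is the sum over the distinct eigenvalues `x` of `A`
of the cardinality of the multiset difference `{p k : a k = x} \ {q k : a k = x}`. -/
def discrepancy {n : ℕ} (a p q : Fin n → ℝ) : ℕ := by
  classical
  exact ∑ x ∈ Finset.univ.image a,
    ((((Finset.univ.filter fun k => a k = x)).val.map p)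
      - (((Finset.univ.filter fun k => a k = x)).val.map q)).card

section Rearrangement

variable {ι : Type*} [Fintype ι]

theorem exists_perm_antivary_comp {n : ℕ} {α β : Type*} [LinearOrder α] [LinearOrder β]
    (f : Fin n → α) (g : Fin n → β) : ∃ σ : Equiv.Perm (Fin n), Antivary f (g ∘ σ) := by
  refine ⟨(Tuple.sort f).symm.trans (Fin.revPerm.trans (Tuple.sort g)), fun i j hij => ?_⟩
  obtain ⟨i, rfl⟩ := (Tuple.sort f).surjective i
  obtain ⟨j, rfl⟩ := (Tuple.sort f).surjective j
  simp only [Function.comp_apply, Equiv.trans_apply, Equiv.symm_apply_apply,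
    Fin.revPerm_apply] at hij
  have hji : j < i := Fin.rev_lt_rev.mp ((Tuple.monotone_sort g).reflect_lt hij)
  exact Tuple.monotone_sort f hji.le

theorem _root_.Antivary.sum_mul_comp_perm_le {a u : ι → ℝ} {τ : Equiv.Perm ι}
    (hτ : Antivary a (u ∘ τ)) (σ : Equiv.Perm ι) :
    ∑ j, a j * u (τ j) ≤ ∑ j, a j * u (σ j) := by
  simpa using hτ.sum_mul_le_sum_mul_comp_perm (σ := τ⁻¹ * σ)

theorem _root_.Antivary.antivary_of_sum_mul_comp_perm_eq {a u : ι → ℝ} {τ σ : Equiv.Perm ι}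
    (hτ : Antivary a (u ∘ τ)) (h : ∑ j, a j * u (σ j) = ∑ j, a j * u (τ j)) :
    Antivary a (u ∘ σ) := by
  have hσ : u ∘ σ = (u ∘ τ) ∘ (τ⁻¹ * σ) := by ext; simp
  rw [hσ, ← hτ.sum_mul_eq_sum_mul_comp_perm_iff]
  simpa using h

theorem _root_.Antivary.sum_mul_comp_perm_eq {a u : ι → ℝ} {σ τ : Equiv.Perm ι}
    (hσ : Antivary a (u ∘ σ)) (hτ : Antivary a (u ∘ τ)) :
    ∑ j, a j * u (σ j) = ∑ j, a j * u (τ j) :=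
  le_antisymm (hσ.sum_mul_comp_perm_le τ) (hτ.sum_mul_comp_perm_le σ)

theorem _root_.Antivary.sum_mul_comp_comp_perm_eq {a p : ι → ℝ} {σ τ : Equiv.Perm ι}
    (hσ : Antivary a (p ∘ σ)) (hτ : Antivary a (p ∘ τ)) (g : ℝ → ℝ) :
    ∑ j, a j * g (p (σ j)) = ∑ j, a j * g (p (τ j)) := by
  classical
  have hmono : ∀ φ : ℝ → ℝ, Monotone φ →
      ∑ j, a j * φ (p (σ j)) = ∑ j, a j * φ (p (τ j)) := fun φ hφ =>
    Antivary.sum_mul_comp_perm_eq (u := φ ∘ p) (fun _ _ h => hσ (hφ.reflect_lt h))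
      (fun _ _ h => hτ (hφ.reflect_lt h))
  set S := Finset.univ.image p
  -- on the values of `p`, `g` is a combination of indicators of `[x, ∞)` and `(x, ∞)`
  have hind : ∀ y ∈ S, g y = ∑ x ∈ S, g x *
      ((if x ≤ y then 1 else 0) - (if x < y then 1 else 0)) := by
    intro y hy
    have hdiff : ∀ x, ((if x ≤ y then (1 : ℝ) else 0) - if x < y then 1 else 0)
        = if x = y then 1 else 0 := fun x => by
      split_ifs <;> first | (exfalso; order) | norm_num
    simp [hdiff, hy]
  have hdecomp : ∀ π : Equiv.Perm ι, ∑ j, a j * g (p (π j)) = ∑ x ∈ S, g x *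
      (∑ j, a j * (if x ≤ p (π j) then 1 else 0) - ∑ j, a j * (if x < p (π j) then 1 else 0)) := by
    intro π
    rw [Finset.sum_congr rfl fun j _ => by
      rw [hind _ (Finset.mem_image_of_mem p (Finset.mem_univ (π j))), Finset.mul_sum]]
    rw [Finset.sum_comm]
    refine Finset.sum_congr rfl fun x _ => ?_
    rw [← Finset.sum_sub_distrib, Finset.mul_sum]
    exact Finset.sum_congr rfl fun j _ => by ring
  rw [hdecomp σ, hdecomp τ]
  refine Finset.sum_congr rfl fun x _ => ?_
  rw [hmono (fun y => if x ≤ y then 1 else 0) fun y z hyz => ?_,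
    hmono (fun y => if x < y then 1 else 0) fun y z hyz => ?_] <;>
  · dsimp only
    split_ifs <;> first | (exfalso; order) | norm_num

end Rearrangement

section DoublyStochastic

variable {ι : Type*} [Fintype ι] [DecidableEq ι]

theorem dotProduct_sum_smul_permMatrix_mulVec (w : Equiv.Perm ι → ℝ) (a v : ι → ℝ) :
    a ⬝ᵥ ((∑ σ, w σ • σ.permMatrix ℝ) *ᵥ v) = ∑ σ, w σ * ∑ j, a j * v (σ j) := by
  simp only [Matrix.sum_mulVec, smul_mulVec, Matrix.permMatrix_mulVec, dotProduct_sum,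
    dotProduct_smul, smul_eq_mul]
  rfl

theorem dotProduct_mulVec_comp_eq_of_le {X : Matrix ι ι ℝ} (hX : X ∈ doublyStochastic ℝ ι)
    {a p : ι → ℝ} {τ : Equiv.Perm ι} (hτ : Antivary a (p ∘ τ))
    (hX_le : a ⬝ᵥ (X *ᵥ p) ≤ ∑ j, a j * p (τ j)) (g : ℝ → ℝ) :
    a ⬝ᵥ (X *ᵥ (g ∘ p)) = ∑ j, a j * g (p (τ j)) := by
  obtain ⟨w, hw0, hw1, rfl⟩ := exists_eq_sum_perm_of_mem_doublyStochastic hX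
  rw [dotProduct_sum_smul_permMatrix_mulVec] at hX_le ⊢
  set E := fun σ : Equiv.Perm ι => ∑ j, a j * p (σ j)
  have hgap : ∀ σ, 0 ≤ w σ * (E σ - E τ) := fun σ =>
    mul_nonneg (hw0 σ) (sub_nonneg.2 (hτ.sum_mul_comp_perm_le σ))
  have hzero : ∑ σ, w σ * (E σ - E τ) = 0 := by
    refine le_antisymm ?_ (Finset.sum_nonneg fun σ _ => hgap σ)
    simpa [mul_sub, Finset.sum_sub_distrib, ← Finset.sum_mul, hw1] using hX_le
  have hterm : ∀ σ, w σ * ∑ j, a j * g (p (σ j)) = w σ * ∑ j, a j * g (p (τ j)) := by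
    intro σ
    rcases mul_eq_zero.1 ((Finset.sum_eq_zero_iff_of_nonneg fun σ _ => hgap σ).1 hzero σ
      (Finset.mem_univ _)) with h | h
    · simp [h]
    · rw [(hτ.antivary_of_sum_mul_comp_perm_eq (sub_eq_zero.1 h)).sum_mul_comp_comp_perm_eq hτ g]
  simp only [Function.comp_apply, hterm, ← Finset.sum_mul, hw1, one_mul]

end DoublyStochastic

section Unitary

variable {ι : Type*} [DecidableEq ι]

theorem map_normSq_permMatrix (σ : Equiv.Perm ι) :
    (σ.permMatrix ℂ).map Complex.normSq = σ.permMatrix ℝ := by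
  ext j k
  simp [Equiv.Perm.permMatrix, PEquiv.toMatrix_apply, apply_ite Complex.normSq]

variable [Fintype ι] {U V : Matrix ι ι ℂ}

theorem isUnitary_iff_mem_unitaryGroup : IsUnitary U ↔ U ∈ unitaryGroup ι ℂ :=
  mem_unitaryGroup_iff'.symm

theorem IsUnitary.mul_conjTranspose (hU : IsUnitary U) : U * Uᴴ = 1 :=
  mul_eq_one_comm.mp hU

theorem IsUnitary.conjTranspose (hU : IsUnitary U) : IsUnitary Uᴴ := by
  rw [IsUnitary, conjTranspose_conjTranspose, hU.mul_conjTranspose]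

theorem IsUnitary.mul (hU : IsUnitary U) (hV : IsUnitary V) : IsUnitary (U * V) :=
  isUnitary_iff_mem_unitaryGroup.2 <|
    Submonoid.mul_mem _ (isUnitary_iff_mem_unitaryGroup.1 hU) (isUnitary_iff_mem_unitaryGroup.1 hV)

theorem isUnitary_permMatrix (σ : Equiv.Perm ι) : IsUnitary (σ.permMatrix ℂ) := by
  rw [IsUnitary, conjTranspose_permMatrix, ← Matrix.permMatrix_mul, mul_inv_cancel,
    Matrix.permMatrix_one]

theorem IsUnitary.map_normSq_mem_doublyStochastic (hU : IsUnitary U) :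
    U.map Complex.normSq ∈ doublyStochastic ℝ ι := by
  refine mem_doublyStochastic_iff_sum.2
    ⟨fun _ _ => Complex.normSq_nonneg _, fun j => ?_, fun k => ?_⟩
  · have h := congrFun (congrFun hU.mul_conjTranspose j) j
    simp only [mul_apply, conjTranspose_apply, Complex.star_def, Complex.mul_conj,
      one_apply_eq] at h
    exact_mod_cast h
  · have h := congrFun (congrFun hU k) k
    simp only [mul_apply, conjTranspose_apply, Complex.star_def, mul_comm (starRingEnd ℂ _),
      Complex.mul_conj, one_apply_eq] at h
    exact_mod_cast h

theorem trace_conjTranspose_mul_diagonal_mul_mul_diagonal (U : Matrix ι ι ℂ) (a c : ι → ℝ) :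
    (Uᴴ * diagonal (fun j => (a j : ℂ)) * U * diagonal (fun k => (c k : ℂ))).trace
      = (a ⬝ᵥ (U.map Complex.normSq *ᵥ c) : ℝ) := by
  have hdiag : ∀ k, (Uᴴ * diagonal (fun j => (a j : ℂ)) * U) k k
      = ∑ j, (a j : ℂ) * (Complex.normSq (U j k) : ℂ) := fun k => by
    rw [mul_apply]
    simp only [mul_diagonal, conjTranspose_apply, Complex.star_def,
      Complex.normSq_eq_conj_mul_self]
    exact Finset.sum_congr rfl fun _ _ => by ring
  simp only [trace, diag_apply, mul_diagonal, hdiag, dotProduct, mulVec, map_apply,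
    Finset.mul_sum, Finset.sum_mul]
  push_cast
  rw [Finset.sum_comm]
  exact Finset.sum_congr rfl fun _ _ => Finset.sum_congr rfl fun _ _ => by ring

theorem trace_mul_diagonal_mul_conjTranspose_mul_diagonal (U : Matrix ι ι ℂ) (a c : ι → ℝ) :
    (U * diagonal (fun k => (c k : ℂ)) * Uᴴ * diagonal (fun j => (a j : ℂ))).trace
      = (a ⬝ᵥ (U.map Complex.normSq *ᵥ c) : ℝ) := by
  rw [trace_mul_cycle, trace_mul_cycle, ← Matrix.mul_assoc,
    trace_conjTranspose_mul_diagonal_mul_mul_diagonal]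

end Unitary

section Conjugation

variable {ι : Type*} [Fintype ι]

theorem conjTranspose_conj (U X : Matrix ι ι ℂ) : (Uᴴ * X * U)ᴴ = Uᴴ * Xᴴ * U := by
  simp only [conjTranspose_mul, conjTranspose_conjTranspose, Matrix.mul_assoc]

variable [DecidableEq ι] {U : Matrix ι ι ℂ}

theorem IsUnitary.conj_mul_conj (hU : IsUnitary U) (X Y : Matrix ι ι ℂ) :
    Uᴴ * X * U * (Uᴴ * Y * U) = Uᴴ * (X * Y) * U :=
  calc Uᴴ * X * U * (Uᴴ * Y * U) = Uᴴ * X * (U * Uᴴ) * Y * U := by simp only [Matrix.mul_assoc]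
    _ = Uᴴ * (X * Y) * U := by rw [hU.mul_conjTranspose, Matrix.mul_one, Matrix.mul_assoc Uᴴ]

theorem IsUnitary.conj_conj_conjTranspose (hU : IsUnitary U) (X : Matrix ι ι ℂ) :
    Uᴴ * (U * X * Uᴴ) * U = X :=
  calc Uᴴ * (U * X * Uᴴ) * U = Uᴴ * U * X * (Uᴴ * U) := by simp only [Matrix.mul_assoc]
    _ = X := by rw [hU, Matrix.one_mul, Matrix.mul_one]

theorem IsUnitary.conj_injective (hU : IsUnitary U) :
    Function.Injective fun X : Matrix ι ι ℂ => Uᴴ * X * U := fun X Y h => by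
  have hinv := hU.conjTranspose.conj_conj_conjTranspose
  simp only [conjTranspose_conjTranspose] at hinv
  rw [← hinv X, ← hinv Y]
  exact congrArg (fun Z => U * Z * Uᴴ) h

theorem IsUnitary.trace_conj (hU : IsUnitary U) (X : Matrix ι ι ℂ) :
    (Uᴴ * X * U).trace = X.trace := by
  rw [trace_mul_cycle, hU.mul_conjTranspose, Matrix.one_mul]

theorem IsUnitary.conj_mul_mul_conjTranspose (hU : IsUnitary U) (Q X : Matrix ι ι ℂ) :
    Uᴴ * (Q * X * Qᴴ) * U = Uᴴ * Q * U * (Uᴴ * X * U) * (Uᴴ * Q * U)ᴴ := by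
  rw [conjTranspose_conj, hU.conj_mul_conj, hU.conj_mul_conj]

theorem IsPassive.conj {A ρi ρ : Matrix ι ι ℂ} (hU : IsUnitary U) (h : IsPassive A ρi ρ) :
    IsPassive (Uᴴ * A * U) (Uᴴ * ρi * U) (Uᴴ * ρ * U) := by
  intro V hV
  rw [← hU.conj_conj_conjTranspose V, ← hU.conj_mul_mul_conjTranspose, hU.conj_mul_conj,
    hU.conj_mul_conj, hU.trace_conj, hU.trace_conj]
  exact h (U * V * Uᴴ) ((hU.mul hV).mul hU.conjTranspose)

def CommutesWithStabilizer (ρ A : Matrix ι ι ℂ) : Prop :=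
  ∀ V, IsUnitary V → V * ρ * Vᴴ = ρ → V * A = A * V

theorem CommutesWithStabilizer.conj {ρ A : Matrix ι ι ℂ} (hU : IsUnitary U)
    (h : CommutesWithStabilizer ρ A) : CommutesWithStabilizer (Uᴴ * ρ * U) (Uᴴ * A * U) := by
  intro W hW hfix
  rw [← hU.conj_conj_conjTranspose W, ← hU.conj_mul_mul_conjTranspose] at hfix
  rw [← hU.conj_conj_conjTranspose W, hU.conj_mul_conj, hU.conj_mul_conj,
    h _ ((hU.mul hW).mul hU.conjTranspose) (hU.conj_injective hfix)]

end Conjugation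

section Stabilizer

variable {ι : Type*} [Fintype ι] [DecidableEq ι] {d : ι → ℂ} {A : Matrix ι ι ℂ}

theorem CommutesWithStabilizer.eq_diagonal (h : CommutesWithStabilizer (diagonal d) A) :
    A = diagonal A.diag := by
  ext j k
  by_cases hjk : j = k
  · subst hjk
    simp
  set s : ι → ℂ := fun x => if x = j then -1 else 1
  have hs : ∀ x, star (s x) * s x = 1 := fun x => by by_cases hx : x = j <;> simp [s, hx]
  have hW : IsUnitary (diagonal s) := by
    rw [IsUnitary, diagonal_conjTranspose, diagonal_mul_diagonal, ← diagonal_one]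
    exact congrArg diagonal (funext hs)
  have hfix : diagonal s * diagonal d * (diagonal s)ᴴ = diagonal d := by
    rw [diagonal_conjTranspose, diagonal_mul_diagonal, diagonal_mul_diagonal]
    exact congrArg diagonal (funext fun x => by
      rw [mul_comm (s x), mul_assoc, Pi.star_apply, mul_comm (s x), hs, mul_one])
  have hentry := congrFun (congrFun (h _ hW hfix) j) k
  simp only [diagonal_mul, mul_diagonal, s, ↓reduceIte, if_neg (Ne.symm hjk)] at hentry
  rw [diagonal_apply_ne _ hjk]
  linear_combination -hentry / 2

theorem CommutesWithStabilizer.apply_self_eq (h : CommutesWithStabilizer (diagonal d) A)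
    {j k : ι} (hjk : d j = d k) : A j j = A k k := by
  set σ := Equiv.swap j k
  have hd : ∀ x, d (σ x) = d x := fun x => by
    rcases eq_or_ne x j with rfl | hxj
    · simp [σ, hjk]
    rcases eq_or_ne x k with rfl | hxk
    · simp [σ, hjk]
    · rw [Equiv.swap_apply_of_ne_of_ne hxj hxk]
  have hfix : σ.permMatrix ℂ * diagonal d * (σ.permMatrix ℂ)ᴴ = diagonal d := by
    rw [conjTranspose_permMatrix, PEquiv.toMatrix_toPEquiv_mul, PEquiv.mul_toMatrix_toPEquiv,
      submatrix_submatrix]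
    ext x y
    simp [diagonal_apply, hd, Equiv.Perm.inv_def]
  have hentry := congrFun (congrFun (h _ (isUnitary_permMatrix σ) hfix) j) k
  rw [PEquiv.toMatrix_toPEquiv_mul, PEquiv.mul_toMatrix_toPEquiv] at hentry
  simpa [σ] using hentry.symm

end Stabilizer

section Diagonalization

variable {ι : Type*} [Fintype ι] [DecidableEq ι]

theorem _root_.Matrix.IsHermitian.exists_isUnitary_conj_eq_diagonal {A : Matrix ι ι ℂ}
    (hA : A.IsHermitian) :
    ∃ U : Matrix ι ι ℂ, ∃ p : ι → ℝ, IsUnitary U ∧ Uᴴ * A * U = diagonal fun j => (p j : ℂ) :=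
  ⟨hA.eigenvectorUnitary, hA.eigenvalues,
    isUnitary_iff_mem_unitaryGroup.2 hA.eigenvectorUnitary.2,
    by simpa [Unitary.conjStarAlgAut_star_apply, Matrix.star_eq_conjTranspose, Function.comp_def]
      using hA.conjStarAlgAut_star_eigenvectorUnitary⟩

theorem CommutesWithStabilizer.exists_eq_diagonal {p : ι → ℝ} {A : Matrix ι ι ℂ}
    (hA : A.IsHermitian) (h : CommutesWithStabilizer (diagonal fun j => (p j : ℂ)) A) :
    ∃ a : ι → ℝ, A = (diagonal fun j => (a j : ℂ)) ∧ ∀ j k, p j = p k → a j = a k := by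
  refine ⟨fun j => (A j j).re, ?_, fun j k hjk => ?_⟩
  · exact h.eq_diagonal.trans (congrArg diagonal (funext fun j => (hA.coe_re_apply_self j).symm))
  · exact congrArg Complex.re (h.apply_self_eq (by rw [hjk]))

end Diagonalization

section Passive

variable {ι : Type*} [Fintype ι] [DecidableEq ι]

theorem trace_eq_of_isPassive_diagonal {a p : ι → ℝ} (hpa : ∀ j k, p j = p k → a j = a k)
    {τ : Equiv.Perm ι} (hτ : Antivary a (p ∘ τ)) {Q : Matrix ι ι ℂ} (hQ : IsUnitary Q)
    (hpass : IsPassive (diagonal fun j => (a j : ℂ)) (diagonal fun j => (p j : ℂ))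
      (Q * (diagonal fun j => (p j : ℂ)) * Qᴴ)) :
    (Qᴴ * (diagonal fun j => (a j : ℂ)) * Q * (diagonal fun j => (a j : ℂ))
      * (diagonal fun j => (p j : ℂ))).trace = (∑ j, a j * (a (τ j) * p (τ j)) : ℝ) := by
  have hle := hpass _ (isUnitary_permMatrix τ)
  simp only [trace_mul_diagonal_mul_conjTranspose_mul_diagonal, map_normSq_permMatrix,
    permMatrix_mulVec, Complex.ofReal_re] at hle
  have hfac : (fun j => a j * p j).FactorsThrough p := fun j k hjk => by
    simp only [hjk, hpa j k hjk]
  obtain ⟨g, hg⟩ : ∃ g : ℝ → ℝ, g ∘ p = fun j => a j * p j :=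
    ⟨Function.extend p (fun j => a j * p j) 0, funext (hfac.extend_apply 0)⟩
  have hag : (fun j => (a j : ℂ) * (p j : ℂ)) = fun j => ((g ∘ p) j : ℂ) := by
    rw [hg]
    push_cast
    rfl
  rw [Matrix.mul_assoc _ (diagonal _), diagonal_mul_diagonal, hag,
    trace_conjTranspose_mul_diagonal_mul_mul_diagonal,
    dotProduct_mulVec_comp_eq_of_le hQ.map_normSq_mem_doublyStochastic hτ hle g]
  simp only [← Function.comp_apply (f := g), hg]

end Passive

theorem variance_process_independent_general
    {n : ℕ} (H ρi : Matrix (Fin n) (Fin n) ℂ)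
    (hH : H.IsHermitian) (hρi : IsDensity ρi)
    (hiso : ∀ V : Matrix (Fin n) (Fin n) ℂ, IsUnitary V → V * ρi * Vᴴ = ρi →
      V * H = H * V) :
    ∀ P P' : Matrix (Fin n) (Fin n) ℂ, IsUnitary P → IsUnitary P' →
      IsPassive H ρi (P * ρi * Pᴴ) → IsPassive H ρi (P' * ρi * P'ᴴ) →
      (Pᴴ * H * P * H * ρi).trace = (P'ᴴ * H * P' * H * ρi).trace := by
  intro P P' hP hP' hpass hpass'
  obtain ⟨U, p, hU, hρU⟩ := hρi.1.1.exists_isUnitary_conj_eq_diagonal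
  have hstab : CommutesWithStabilizer (diagonal fun j => (p j : ℂ)) (Uᴴ * H * U) :=
    hρU ▸ CommutesWithStabilizer.conj hU hiso
  obtain ⟨a, hHU, hpa⟩ := hstab.exists_eq_diagonal (isHermitian_conjTranspose_mul_mul U hH)
  obtain ⟨τ, hτ⟩ := exists_perm_antivary_comp a p
  have key : ∀ Q, IsUnitary Q → IsPassive H ρi (Q * ρi * Qᴴ) →
      (Qᴴ * H * Q * H * ρi).trace = ((∑ j, a j * (a (τ j) * p (τ j)) : ℝ) : ℂ) := by
    intro Q hQ hpassQ
    have hpassQ' := hpassQ.conj hU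
    rw [hU.conj_mul_mul_conjTranspose, hHU, hρU] at hpassQ'
    rw [← trace_eq_of_isPassive_diagonal hpa hτ ((hU.conjTranspose.mul hQ).mul hU) hpassQ',
      ← hHU, ← hρU, conjTranspose_conj, hU.conj_mul_conj, hU.conj_mul_conj, hU.conj_mul_conj,
      hU.conj_mul_conj, hU.trace_conj]
  rw [key P hP hpass, key P' hP' hpass']

/-- if every unitary fixing `ρi` under conjugation commutes with `H`, then
the variation in transferred energy is the same for all complete discharge processes:
`tr(P†HPHρi)` does not depend on the passivizing unitary `P`. -/
theorem variance_process_independent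
    {n : ℕ} (hn : 1 ≤ n) (H ρi : Matrix (Fin n) (Fin n) ℂ)
    (hH : H.IsHermitian) (hρi : IsDensity ρi) (hcomm : H * ρi = ρi * H)
    (hiso : ∀ V : Matrix (Fin n) (Fin n) ℂ, IsUnitary V → V * ρi * Vᴴ = ρi →
      V * H = H * V) :
    ∀ P P' : Matrix (Fin n) (Fin n) ℂ, IsUnitary P → IsUnitary P' →
      IsPassive H ρi (P * ρi * Pᴴ) → IsPassive H ρi (P' * ρi * P'ᴴ) →
      (Pᴴ * H * P * H * ρi).trace = (P'ᴴ * H * P' * H * ρi).trace :=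
  variance_process_independent_general H ρi hH hρi hiso

end QSLPaper
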